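/- arXiv:1905.11790 — 2 statements merged into one kernel-verified Lean document; each statement's English description precedes it below -/
import Mathlib

section
/- Let D be a metric on ℂ that induces the Euclidean topology and such that (ℂ, D) is a length space. Let z, u ∈ ℂ and let ρ₁, ρ₂ be real numbers with 0 < ρ₁ < ρ₂ ≤ |u − z|. Then the D-distance between the Euclidean circles {w ∈ ℂ : |w − z| = ρ₁} and {w ∈ ℂ : |w − z| = ρ₂} is at most D(z, u). -/
open scoped ENNReal NNReal

noncomputable section

/-- Distance in an alternative metric `D` on `ℂ`. -/
def mdist (D : MetricSpace ℂ) (a b : ℂ) : ℝ := @dist ℂ D.toDist a b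

/-- The `D`-distance between two sets: `inf {D(a,b) : a ∈ A, b ∈ B}`. -/
def msetDist (D : MetricSpace ℂ) (A B : Set ℂ) : ℝ :=
  sInf {r : ℝ | ∃ a ∈ A, ∃ b ∈ B, r = mdist D a b}

/-- The `D`-diameter of a set: `sup {D(u,v) : u, v ∈ A}`. -/
def mdiam (D : MetricSpace ℂ) (A : Set ℂ) : ℝ≥0∞ :=
  @EMetric.diam ℂ (@PseudoMetricSpace.toPseudoEMetricSpace ℂ D.toPseudoMetricSpace) A

/-- Hausdorff dimension of `X` as a subset of the metric space `(ℂ, D)`. -/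
def mdimH (D : MetricSpace ℂ) (X : Set ℂ) : ℝ≥0∞ :=
  @dimH ℂ (@MetricSpace.toEMetricSpace ℂ D) X

/-- The open Euclidean `r`-neighborhood of a set `A ⊆ ℂ`. -/
def euclNbhd (r : ℝ) (A : Set ℂ) : Set ℂ := {z | ∃ a ∈ A, dist z a < r}

/-- The dyadic square `[j 2^(-n), (j+1) 2^(-n)] × [k 2^(-n), (k+1) 2^(-n)]` in `ℂ ≅ ℝ²`. -/
def dyadicSquare (n j k : ℤ) : Set ℂ :=
  {z : ℂ | z.re ∈ Set.Icc ((j : ℝ) * 2 ^ (-n)) (((j : ℝ) + 1) * 2 ^ (-n)) ∧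
           z.im ∈ Set.Icc ((k : ℝ) * 2 ^ (-n)) (((k : ℝ) + 1) * 2 ^ (-n))}

/-- The `D`-length of a path restricted to a set: the supremum over all finite increasing
sequences of sample points in the set of the sums of consecutive `D`-distances. -/
def mpathLength (D : MetricSpace ℂ) (P : ℝ → ℂ) (s : Set ℝ) : ℝ≥0∞ :=
  @eVariationOn ℝ _ ℂ (@PseudoMetricSpace.toPseudoEMetricSpace ℂ D.toPseudoMetricSpace) P s

/-- `(ℂ, D)` is a length space: `D(x,y)` is the infimum of the `D`-lengths of continuous
paths from `x` to `y`. -/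
def IsLengthSpace (D : MetricSpace ℂ) : Prop :=
  ∀ x y : ℂ,
    ENNReal.ofReal (mdist D x y) =
      ⨅ (P : ℝ → ℂ) (_ : ContinuousOn P (Set.Icc 0 1)) (_ : P 0 = x) (_ : P 1 = y),
        mpathLength D P (Set.Icc 0 1)

/-- If `D` is a metric on `ℂ` inducing the Euclidean topology such that
`(ℂ, D)` is a length space, `z, u ∈ ℂ` and `0 < ρ₁ < ρ₂ ≤ |u - z|`, then the `D`-distance
between the Euclidean circles of radii `ρ₁` and `ρ₂` around `z` is at most `D(z, u)`. -/
theorem dist_between_circles_le (D : MetricSpace ℂ)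
    (htop : D.toUniformSpace.toTopologicalSpace = (inferInstance : TopologicalSpace ℂ))
    (hlen : IsLengthSpace D) (z u : ℂ) (ρ₁ ρ₂ : ℝ)
    (h1 : 0 < ρ₁) (h12 : ρ₁ < ρ₂) (h2 : ρ₂ ≤ dist u z) :
    msetDist D {w : ℂ | dist w z = ρ₁} {w : ℂ | dist w z = ρ₂} ≤ mdist D z u := by
  have hbdd : BddBelow {r : ℝ | ∃ a ∈ {w : ℂ | dist w z = ρ₁}, ∃ b ∈ {w : ℂ | dist w z = ρ₂},
      r = mdist D a b} := by
    refine ⟨0, ?_⟩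
    rintro r ⟨a, -, b, -, rfl⟩
    exact @dist_nonneg ℂ D.toPseudoMetricSpace a b
  refine le_of_forall_pos_le_add ?_
  intro ε hε
  have hfin : (⨅ (P : ℝ → ℂ) (_ : ContinuousOn P (Set.Icc 0 1)) (_ : P 0 = z) (_ : P 1 = u),
      mpathLength D P (Set.Icc 0 1)) < ENNReal.ofReal (mdist D z u) + ENNReal.ofReal ε := by
    rw [← hlen z u]
    exact ENNReal.lt_add_right ENNReal.ofReal_ne_top
      (ne_of_gt (ENNReal.ofReal_pos.2 hε))
  obtain ⟨P, hP⟩ := iInf_lt_iff.1 hfin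
  obtain ⟨hPc, hP⟩ := iInf_lt_iff.1 hP
  obtain ⟨hP0, hP⟩ := iInf_lt_iff.1 hP
  obtain ⟨hP1, hP⟩ := iInf_lt_iff.1 hP
  have hg : ContinuousOn (fun t => dist (P t) z) (Set.Icc (0:ℝ) 1) :=
    ((continuous_id.dist continuous_const).comp_continuousOn hPc)
  have hsub := intermediate_value_Icc (by norm_num : (0:ℝ) ≤ 1) hg
  have hg0 : dist (P 0) z = 0 := by rw [hP0, dist_self]
  have hg1 : dist (P 1) z = dist u z := by rw [hP1]
  obtain ⟨a, ha, ha'⟩ := hsub (by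
    simp only [hg0, hg1]
    exact ⟨h1.le, (h12.le.trans h2)⟩ : ρ₁ ∈ Set.Icc (dist (P 0) z) (dist (P 1) z))
  obtain ⟨b, hb, hb'⟩ := hsub (by
    simp only [hg0, hg1]
    exact ⟨(h1.trans h12).le, h2⟩ : ρ₂ ∈ Set.Icc (dist (P 0) z) (dist (P 1) z))
  have key : (@edist ℂ (@PseudoMetricSpace.toPseudoEMetricSpace ℂ D.toPseudoMetricSpace).toEDist
      (P a) (P b)) ≤ mpathLength D P (Set.Icc 0 1) :=
    @eVariationOn.edist_le ℝ _ ℂ (@PseudoMetricSpace.toPseudoEMetricSpace ℂ D.toPseudoMetricSpace)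
      P _ a b ha hb
  have key2 : ENNReal.ofReal (mdist D (P a) (P b)) < ENNReal.ofReal (mdist D z u + ε) := by
    have he : ENNReal.ofReal (mdist D (P a) (P b)) =
        @edist ℂ (@PseudoMetricSpace.toPseudoEMetricSpace ℂ D.toPseudoMetricSpace).toEDist
          (P a) (P b) := (@edist_dist ℂ D.toPseudoMetricSpace (P a) (P b)).symm
    rw [he]
    calc _ ≤ mpathLength D P (Set.Icc 0 1) := key
    _ < ENNReal.ofReal (mdist D z u) + ENNReal.ofReal ε := hP
    _ = ENNReal.ofReal (mdist D z u + ε) := by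
        have h0 : (0:ℝ) ≤ mdist D z u := @dist_nonneg ℂ D.toPseudoMetricSpace z u
        rw [ENNReal.ofReal_add h0 hε.le]
  have key3 : mdist D (P a) (P b) ≤ mdist D z u + ε := by
    by_contra hcon
    push_neg at hcon
    exact absurd (ENNReal.ofReal_le_ofReal hcon.le) (not_le.2 key2)
  calc msetDist D {w : ℂ | dist w z = ρ₁} {w : ℂ | dist w z = ρ₂}
      ≤ mdist D (P a) (P b) := csInf_le hbdd ⟨P a, ha', P b, hb', rfl⟩
    _ ≤ mdist D z u + ε := key3
end
end

section
/- Let D be a metric on ℂ that induces the Euclidean topology, let m ∈ ℕ, and suppose that the D-distance between the square [0,2]² and the complement ℂ∖B_2([0,2]²) of its open Euclidean 2-neighborhood is strictly greater than 2^{−m}. Then the squares of R_m(D) cover the unit square: every point of [0,1]² lies in some square S ∈ R_m(D). -/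
open scoped ENNReal NNReal

noncomputable section

/-- The collection `R_m(D)`, encoded by triples `(n, j, k)` with `S = dyadicSquare n j k ⊆ [0,1]²`:
those dyadic squares `S ⊆ [0,1]²` with `D(S, ℂ ∖ B_{|S|}(S)) ≤ 2^{-m}` and
`D(S', ℂ ∖ B_{|S'|}(S')) > 2^{-m}` for the dyadic parent `S'`. -/
def RmSet (D : MetricSpace ℂ) (m : ℕ) : Set (ℕ × ℕ × ℕ) :=
  {p | p.2.1 < 2 ^ p.1 ∧ p.2.2 < 2 ^ p.1 ∧
    msetDist D (dyadicSquare p.1 p.2.1 p.2.2)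
      ((euclNbhd (2 ^ (-(p.1 : ℤ))) (dyadicSquare p.1 p.2.1 p.2.2))ᶜ) ≤ 2 ^ (-(m : ℤ)) ∧
    (2 : ℝ) ^ (-(m : ℤ)) <
      msetDist D (dyadicSquare ((p.1 : ℤ) - 1) (p.2.1 / 2) (p.2.2 / 2))
        ((euclNbhd (2 ^ (-((p.1 : ℤ) - 1)))
          (dyadicSquare ((p.1 : ℤ) - 1) (p.2.1 / 2) (p.2.2 / 2)))ᶜ)}

/-- The unit square `[0,1]²` in `ℂ`. -/
def unitSquare : Set ℂ := dyadicSquare 0 0 0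

open Filter Topology

/-! Along the nested dyadic squares `S₀ ⊇ S₁ ⊇ ⋯` containing `z`, the crossing distance
`D(Sₙ, ℂ ∖ B_{|Sₙ|}(Sₙ))` tends to `0`: the complement contains the point `z + 2|Sₙ|`, which is
Euclidean-close, hence `D`-close, to `z ∈ Sₙ`. The first `Sₙ` whose crossing distance is at
most `2^{-m}` lies in `R_m(D)`, since its parent is `Sₙ₋₁`, or `[0,2]²` when `n = 0`. -/

/-- `D(S, ℂ ∖ B_{|S|}(S))` for the dyadic square `S = dyadicSquare n j k`. -/
def crossingDist (D : MetricSpace ℂ) (n j k : ℤ) : ℝ :=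
  msetDist D (dyadicSquare n j k) (euclNbhd (2 ^ (-n)) (dyadicSquare n j k))ᶜ

lemma msetDist_le_mdist (D : MetricSpace ℂ) {A B : Set ℂ} {a b : ℂ} (ha : a ∈ A) (hb : b ∈ B) :
    msetDist D A B ≤ mdist D a b := by
  refine csInf_le ⟨0, ?_⟩ ⟨a, ha, b, hb, rfl⟩
  rintro r ⟨a', -, b', -, rfl⟩
  exact @dist_nonneg ℂ D.toPseudoMetricSpace a' b'

lemma eventually_mdist_lt (D : MetricSpace ℂ)
    (htop : D.toUniformSpace.toTopologicalSpace = (inferInstance : TopologicalSpace ℂ))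
    (z : ℂ) {ε : ℝ} (hε : 0 < ε) : ∀ᶠ w in 𝓝 z, mdist D z w < ε := by
  have hball : @Metric.ball ℂ D.toPseudoMetricSpace z ε ∈
      @nhds ℂ D.toUniformSpace.toTopologicalSpace z :=
    @Metric.ball_mem_nhds ℂ D.toPseudoMetricSpace z ε hε
  rw [htop] at hball
  filter_upwards [hball] with w hw
  exact (@dist_comm ℂ D.toPseudoMetricSpace z w).trans_lt hw

lemma add_mem_compl_euclNbhd_dyadicSquare {n j k : ℤ} {z : ℂ} (hz : z ∈ dyadicSquare n j k) :
    z + ((2 * 2 ^ (-n) : ℝ) : ℂ) ∈ (euclNbhd (2 ^ (-n)) (dyadicSquare n j k))ᶜ := by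
  rintro ⟨a, ha, hlt⟩
  have hre : (z + ((2 * 2 ^ (-n) : ℝ) : ℂ) - a).re ≤ dist (z + ((2 * 2 ^ (-n) : ℝ) : ℂ)) a := by
    rw [Complex.dist_eq]
    exact (le_abs_self _).trans (Complex.abs_re_le_norm _)
  simp only [Complex.sub_re, Complex.add_re, Complex.ofReal_re] at hre
  linarith [hz.1.1, ha.1.2]

/-- The index of the dyadic interval `[j 2⁻ⁿ, (j+1) 2⁻ⁿ]` containing `x ∈ [0,1]`; the `min`
keeps `x = 1` in the last interval `j = 2ⁿ - 1` rather than in `[1, 1 + 2⁻ⁿ]`. -/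
def dyadicIndex (x : ℝ) (n : ℕ) : ℕ := min ⌊x * 2 ^ n⌋₊ (2 ^ n - 1)

lemma dyadicIndex_lt (x : ℝ) (n : ℕ) : dyadicIndex x n < 2 ^ n :=
  (min_le_right _ _).trans_lt (Nat.sub_lt (Nat.two_pow_pos n) one_pos)

lemma dyadicIndex_mul_le {x : ℝ} (hx : 0 ≤ x) (n : ℕ) :
    (dyadicIndex x n : ℝ) * 2 ^ (-(n : ℤ)) ≤ x := by
  rw [zpow_neg, zpow_natCast, ← div_eq_mul_inv, div_le_iff₀ (by positivity)]
  calc (dyadicIndex x n : ℝ) ≤ ⌊x * 2 ^ n⌋₊ := Nat.cast_le.mpr (min_le_left _ _)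
    _ ≤ x * 2 ^ n := Nat.floor_le (by positivity)

lemma le_dyadicIndex_add_one_mul {x : ℝ} (hx : x ≤ 1) (n : ℕ) :
    x ≤ ((dyadicIndex x n : ℝ) + 1) * 2 ^ (-(n : ℤ)) := by
  rw [zpow_neg, zpow_natCast, ← div_eq_mul_inv, le_div_iff₀ (by positivity)]
  rcases min_cases ⌊x * 2 ^ n⌋₊ (2 ^ n - 1) with ⟨h, -⟩ | ⟨h, -⟩ <;> rw [dyadicIndex, h]
  · exact (Nat.lt_floor_add_one _).le
  · rw [Nat.cast_sub Nat.one_le_two_pow]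
    push_cast
    nlinarith [pow_pos (two_pos : (0 : ℝ) < 2) n]

lemma dyadicIndex_succ_div_two (x : ℝ) (n : ℕ) :
    dyadicIndex x (n + 1) / 2 = dyadicIndex x n := by
  have hfloor : ⌊x * 2 ^ (n + 1)⌋₊ / 2 = ⌊x * 2 ^ n⌋₊ := by
    rw [← Nat.floor_div_natCast]
    congr 1
    push_cast
    ring
  have hpow : 2 ^ (n + 1) = 2 * 2 ^ n := by ring
  have hone : 1 ≤ 2 ^ n := Nat.one_le_two_pow
  rw [dyadicIndex, dyadicIndex, ← hfloor]
  omega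

lemma mem_dyadicSquare_dyadicIndex {z : ℂ} (hz : z ∈ unitSquare) (n : ℕ) :
    z ∈ dyadicSquare n (dyadicIndex z.re n) (dyadicIndex z.im n) := by
  obtain ⟨⟨hre₀, hre₁⟩, him₀, him₁⟩ := hz
  simp only [Int.cast_zero, zero_mul, neg_zero, zpow_zero, zero_add, one_mul] at *
  refine ⟨⟨?_, ?_⟩, ?_, ?_⟩
  · exact_mod_cast dyadicIndex_mul_le hre₀ n
  · exact_mod_cast le_dyadicIndex_add_one_mul hre₁ n
  · exact_mod_cast dyadicIndex_mul_le him₀ n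
  · exact_mod_cast le_dyadicIndex_add_one_mul him₁ n

lemma exists_crossingDist_dyadicIndex_le (D : MetricSpace ℂ)
    (htop : D.toUniformSpace.toTopologicalSpace = (inferInstance : TopologicalSpace ℂ))
    {z : ℂ} (hz : z ∈ unitSquare) {ε : ℝ} (hε : 0 < ε) :
    ∃ n : ℕ, crossingDist D n (dyadicIndex z.re n) (dyadicIndex z.im n) ≤ ε := by
  have hside : Tendsto (fun n : ℕ => (2 : ℝ) ^ (-(n : ℤ))) atTop (𝓝 0) := by
    simp only [zpow_neg, zpow_natCast]
    exact tendsto_inv_atTop_zero.comp (tendsto_pow_atTop_atTop_of_one_lt one_lt_two)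
  have hw : Tendsto (fun n : ℕ => z + ((2 * 2 ^ (-(n : ℤ)) : ℝ) : ℂ)) atTop (𝓝 z) := by
    have h2side : Tendsto (fun n : ℕ => 2 * (2 : ℝ) ^ (-(n : ℤ))) atTop (𝓝 0) := by
      simpa using hside.const_mul 2
    simpa using tendsto_const_nhds.add (Complex.continuous_ofReal.tendsto 0 |>.comp h2side)
  obtain ⟨n, hn⟩ := (hw.eventually (eventually_mdist_lt D htop z hε)).exists
  have hzn := mem_dyadicSquare_dyadicIndex hz n
  exact ⟨n, ((msetDist_le_mdist D hzn (add_mem_compl_euclNbhd_dyadicSquare hzn)).trans_lt hn).le⟩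

/-- If `D` induces the Euclidean topology and the `D`-distance between `[0,2]²`
and the complement of its open Euclidean `2`-neighborhood exceeds `2^{-m}`, then the squares of
`R_m(D)` cover the unit square `[0,1]²`. -/
theorem RmSet_covers (D : MetricSpace ℂ)
    (htop : D.toUniformSpace.toTopologicalSpace = (inferInstance : TopologicalSpace ℂ))
    (m : ℕ)
    (hbig : (2 : ℝ) ^ (-(m : ℤ)) <
      msetDist D (dyadicSquare (-1) 0 0) ((euclNbhd 2 (dyadicSquare (-1) 0 0))ᶜ)) :
    ∀ z ∈ unitSquare, ∃ p ∈ RmSet D m, z ∈ dyadicSquare p.1 p.2.1 p.2.2 := by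
  intro z hz
  set J := dyadicIndex z.re
  set K := dyadicIndex z.im
  have hex := exists_crossingDist_dyadicIndex_le D htop hz (ε := 2 ^ (-(m : ℤ))) (by positivity)
  obtain ⟨n, hn, hmin⟩ : ∃ n : ℕ, crossingDist D n (J n) (K n) ≤ 2 ^ (-(m : ℤ)) ∧
      ∀ k : ℕ, k < n → 2 ^ (-(m : ℤ)) < crossingDist D k (J k) (K k) :=
    ⟨Nat.find hex, Nat.find_spec hex, fun k hk => not_le.mp (Nat.find_min hex hk)⟩
  have hparent :
      2 ^ (-(m : ℤ)) < crossingDist D ((n : ℤ) - 1) ((J n : ℤ) / 2) ((K n : ℤ) / 2) := by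
    cases n with
    | zero => simpa [crossingDist, J, K, dyadicIndex] using hbig
    | succ n =>
      have hJ : (J (n + 1) : ℤ) / 2 = J n := by
        have : J (n + 1) / 2 = J n := dyadicIndex_succ_div_two z.re n
        omega
      have hK : (K (n + 1) : ℤ) / 2 = K n := by
        have : K (n + 1) / 2 = K n := dyadicIndex_succ_div_two z.im n
        omega
      simpa [hJ, hK] using hmin n n.lt_succ_self
  exact ⟨(n, J n, K n), ⟨dyadicIndex_lt _ _, dyadicIndex_lt _ _, hn, hparent⟩,
    mem_dyadicSquare_dyadicIndex hz n⟩
end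
end
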